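/- Let p ∈ (2,6) and define h : (0,∞) → ℝ by h(x) = x · ∫_{√(p/(p+2x²))}^{1} (1−s²)^{(4−p)/(p−2)} ds. Then h is differentiable with h'(x) = ∫_{√(p/(p+2x²))}^{1} (1−s²)^{(4−p)/(p−2)} ds + 2^{2/(p−2)}·√p·x^{4/(p−2)} / (p+2x²)^{(p+2)/(2(p−2))} > 0 for every x > 0; in particular h is strictly increasing on (0,∞). -/

import Mathlib

/-!
Product rule and the fundamental theorem of calculus at the lower limit `g(x) = √(p/(p+2x²))`:
the integrand is continuous at `g(x) < 1`, and integrable up to `1` because its exponent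
`(4-p)/(p-2) = 2/(p-2) - 1` exceeds `-1`. Since `1 - g² = 2x²/(p+2x²)` and
`g' = -2√p x/(p+2x²)^{3/2}`, the boundary term `-x (1-g²)^{(4-p)/(p-2)} g'` collapses to the
closed form `2^{2/(p-2)} √p x^{4/(p-2)} / (p+2x²)^{(p+2)/(2(p-2))}`. It is positive and the integral
is nonnegative, so `h` is strictly increasing by the mean value theorem.
-/

open Set Filter

noncomputable section

/-- The function `h(x) = x ∫_{√(p/(p+2x²))}^1 (1-s²)^{(4-p)/(p-2)} ds`. -/
def hFun (p : ℝ) (x : ℝ) : ℝ :=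
  x * ∫ s in Real.sqrt (p / (p + 2 * x ^ 2))..(1 : ℝ),
    (1 - s ^ 2) ^ ((4 - p) / (p - 2))

/-- The claimed derivative of `h`. -/
def hFunDeriv (p : ℝ) (x : ℝ) : ℝ :=
  (∫ s in Real.sqrt (p / (p + 2 * x ^ 2))..(1 : ℝ),
      (1 - s ^ 2) ^ ((4 - p) / (p - 2))) +
    2 ^ ((2 : ℝ) / (p - 2)) * Real.sqrt p * x ^ ((4 : ℝ) / (p - 2)) /
      (p + 2 * x ^ 2) ^ ((p + 2) / (2 * (p - 2)))

open MeasureTheory intervalIntegral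

section OneSubSqRpow

variable {α : ℝ}

theorem intervalIntegrable_one_sub_sq_rpow (hα : -1 < α) :
    IntervalIntegrable (fun s : ℝ => (1 - s ^ 2) ^ α) volume 0 1 := by
  have h_sub : IntervalIntegrable (fun s : ℝ => (1 - s) ^ α) volume 0 1 := by
    simpa using ((intervalIntegrable_rpow' hα (a := 0) (b := 1)).comp_sub_left 1).symm
  have h_prod : IntervalIntegrable (fun s : ℝ => (1 - s) ^ α * (1 + s) ^ α) volume 0 1 := by
    refine h_sub.mul_continuousOn (ContinuousOn.rpow_const (by fun_prop) fun s hs => ?_)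
    rw [uIcc_of_le zero_le_one] at hs
    exact Or.inl (by linarith [hs.1])
  rw [intervalIntegrable_iff_integrableOn_Ioc_of_le zero_le_one] at h_prod ⊢
  refine h_prod.congr_fun (fun s hs => ?_) measurableSet_Ioc
  dsimp only
  rw [← Real.mul_rpow (by linarith [hs.2]) (by linarith [hs.1])]
  ring_nf

theorem integral_one_sub_sq_rpow_nonneg {g : ℝ} (hg₀ : 0 ≤ g) (hg₁ : g ≤ 1) :
    0 ≤ ∫ s in g..1, (1 - s ^ 2) ^ α :=
  integral_nonneg hg₁ fun s hs => Real.rpow_nonneg (by nlinarith [hs.1, hs.2]) α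

theorem hasDerivAt_integral_one_sub_sq_rpow (hα : -1 < α) {g : ℝ} (hg₀ : 0 ≤ g) (hg₁ : g < 1) :
    HasDerivAt (fun y => ∫ s in y..1, (1 - s ^ 2) ^ α) (-(1 - g ^ 2) ^ α) g := by
  have hcont : ContinuousOn (fun s : ℝ => (1 - s ^ 2) ^ α) (Ioo (-1) 1) :=
    ContinuousOn.rpow_const (by fun_prop) fun s hs => Or.inl (by nlinarith [hs.1, hs.2])
  have hg : g ∈ Ioo (-1) 1 := ⟨by linarith, hg₁⟩
  refine integral_hasDerivAt_left ?_ (hcont.stronglyMeasurableAtFilter isOpen_Ioo g hg)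
    (hcont.continuousAt (isOpen_Ioo.mem_nhds hg))
  refine (intervalIntegrable_one_sub_sq_rpow hα).mono_set ?_
  rw [uIcc_of_le hg₁.le, uIcc_of_le zero_le_one]
  exact Icc_subset_Icc hg₀ le_rfl

end OneSubSqRpow

section LowerLimit

variable {p : ℝ}

theorem sqrt_div_add_two_mul_sq_pos (hp : 0 < p) (x : ℝ) : 0 < √(p / (p + 2 * x ^ 2)) :=
  Real.sqrt_pos.2 (by positivity)

theorem sqrt_div_add_two_mul_sq_lt_one (hp : 0 < p) {x : ℝ} (hx : x ≠ 0) :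
    √(p / (p + 2 * x ^ 2)) < 1 := by
  rw [Real.sqrt_lt' one_pos, one_pow, div_lt_one (by positivity)]
  have : 0 < x ^ 2 := by positivity
  linarith

theorem one_sub_sqrt_div_add_two_mul_sq_sq (hp : 0 < p) (x : ℝ) :
    1 - √(p / (p + 2 * x ^ 2)) ^ 2 = 2 * x ^ 2 / (p + 2 * x ^ 2) := by
  have hu : 0 < p + 2 * x ^ 2 := by positivity
  rw [Real.sq_sqrt (by positivity)]
  field_simp
  ring

theorem hasDerivAt_sqrt_div_add_two_mul_sq (hp : 0 < p) (x : ℝ) :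
    HasDerivAt (fun x => √(p / (p + 2 * x ^ 2)))
      (-(2 * √p * x / (p + 2 * x ^ 2) ^ (3 / 2 : ℝ))) x := by
  have hu : 0 < p + 2 * x ^ 2 := by positivity
  have hden : HasDerivAt (fun x : ℝ => p + 2 * x ^ 2) (4 * x) x :=
    (((hasDerivAt_pow 2 x).const_mul 2).const_add p).congr_deriv (by ring)
  convert ((hasDerivAt_const x p).fun_div hden hu.ne').sqrt (div_pos hp hu).ne' using 1
  rw [Real.sqrt_div hp.le, show (3 / 2 : ℝ) = 1 + 1 / 2 by norm_num, Real.rpow_add hu,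
    Real.rpow_one, ← Real.sqrt_eq_rpow]
  have hsp : 0 < √p := Real.sqrt_pos.2 hp
  have hsu : 0 < √(p + 2 * x ^ 2) := Real.sqrt_pos.2 hu
  field_simp
  rw [Real.sq_sqrt hp.le, Real.sq_sqrt hu.le]
  ring

end LowerLimit

theorem mul_rpow_boundary_term {x u : ℝ} (hx : 0 < x) (hu : 0 < u) (a c : ℝ) :
    x * ((2 * x ^ 2 / u) ^ (c - 1) * (2 * a * x / u ^ (3 / 2 : ℝ))) =
      2 ^ c * a * x ^ (2 * c) / u ^ (c + 1 / 2) := by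
  have hw : 0 < 2 * x ^ 2 / u := by positivity
  rw [Real.rpow_sub_one hw.ne', Real.div_rpow (by positivity) hu.le,
    Real.mul_rpow zero_le_two (by positivity), ← Real.rpow_natCast_mul hx.le, Nat.cast_ofNat,
    show (3 / 2 : ℝ) = 1 + 1 / 2 by norm_num, Real.rpow_add hu, Real.rpow_add hu, Real.rpow_one]
  have : 0 < u ^ (1 / 2 : ℝ) := by positivity
  field_simp

theorem hasDerivAt_hFun {p x : ℝ} (hp : 2 < p) (hx : 0 < x) :
    HasDerivAt (hFun p) (hFunDeriv p x) x := by
  have hp₀ : 0 < p := by linarith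
  have hα : -1 < (4 - p) / (p - 2) := by
    rw [lt_div_iff₀ (by linarith)]
    linarith
  have hI := (hasDerivAt_integral_one_sub_sq_rpow hα (sqrt_div_add_two_mul_sq_pos hp₀ x).le
    (sqrt_div_add_two_mul_sq_lt_one hp₀ hx.ne')).comp x (hasDerivAt_sqrt_div_add_two_mul_sq hp₀ x)
  refine ((hasDerivAt_id' x).fun_mul hI).congr_deriv ?_
  have hne : p - 2 ≠ 0 := by linarith
  have hc : (4 - p) / (p - 2) = 2 / (p - 2) - 1 := by field_simp; ring
  have h2c : (4 : ℝ) / (p - 2) = 2 * (2 / (p - 2)) := by ring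
  have hc' : (p + 2) / (2 * (p - 2)) = 2 / (p - 2) + 1 / 2 := by field_simp; ring
  rw [hFunDeriv, Function.comp_apply, one_mul, one_sub_sqrt_div_add_two_mul_sq_sq hp₀,
    neg_mul_neg, hc, h2c, hc', mul_rpow_boundary_term hx (by positivity)]

theorem hFunDeriv_pos {p x : ℝ} (hp : 2 < p) (hx : 0 < x) : 0 < hFunDeriv p x := by
  have hp₀ : 0 < p := by linarith
  have hsp : 0 < √p := Real.sqrt_pos.2 hp₀
  exact add_pos_of_nonneg_of_pos (integral_one_sub_sq_rpow_nonneg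
    (sqrt_div_add_two_mul_sq_pos hp₀ x).le (sqrt_div_add_two_mul_sq_lt_one hp₀ hx.ne').le)
    (by positivity)

theorem statement_18_general (p : ℝ) (hp2 : 2 < p) :
    (∀ x : ℝ, 0 < x →
      HasDerivAt (hFun p) (hFunDeriv p x) x ∧ 0 < hFunDeriv p x) ∧
    StrictMonoOn (hFun p) (Ioi 0) := by
  have hderiv : ∀ x : ℝ, 0 < x → HasDerivAt (hFun p) (hFunDeriv p x) x ∧ 0 < hFunDeriv p x :=
    fun x hx => ⟨hasDerivAt_hFun hp2 hx, hFunDeriv_pos hp2 hx⟩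
  refine ⟨hderiv, strictMonoOn_of_hasDerivWithinAt_pos (f' := hFunDeriv p) (convex_Ioi 0) ?_ ?_ ?_⟩
  · exact fun x hx => (hderiv x hx).1.continuousAt.continuousWithinAt
  · rw [interior_Ioi]
    exact fun x hx => (hderiv x hx).1.hasDerivWithinAt
  · rw [interior_Ioi]
    exact fun x hx => (hderiv x hx).2

/-- `h` is differentiable on `(0,∞)` with the explicit positive derivative
`h'(x) = ∫_{√(p/(p+2x²))}^1 (1-s²)^{(4-p)/(p-2)} ds
  + 2^{2/(p-2)} √p x^{4/(p-2)} / (p+2x²)^{(p+2)/(2(p-2))}`;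
in particular `h` is strictly increasing on `(0,∞)`. -/
theorem statement_18 (p : ℝ) (hp2 : 2 < p) (hp6 : p < 6) :
    (∀ x : ℝ, 0 < x →
      HasDerivAt (hFun p) (hFunDeriv p x) x ∧ 0 < hFunDeriv p x) ∧
    StrictMonoOn (hFun p) (Ioi 0) :=
  statement_18_general p hp2
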